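/- Fix ε > 0 and define F : ℝ² → ℝ³ by F(u, v) = (M1, M2, M3), where, with D = 4 + ε²(u² + v²): M1 = 2·(2·I11·u + ε·v·(I13·u + I23·v))/D, M2 = 2·(2·I22·v − ε·u·(I13·u + I23·v))/D, M3 = 2·(2·(I13·u + I23·v) + ε·(I22 − I11)·u·v)/D. Then F(0, 0) = (0, 0, 0), F is differentiable at (0, 0), and the image of the derivative of F at (0, 0) equals the plane d* = {(X, Y, Z) ∈ ℝ³ : I11·I22·Z = I13·I22·X + I11·I23·Y}. In particular the discrete momentum locus F(ℝ²) and the plane d* are tangent at the origin. -/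

import Mathlib

/-! At the origin the denominator `4 + ε² (u² + v²)` equals `4` and has vanishing derivative,
while each numerator is four times a linear form plus `ε` times a product of two functions
vanishing at the origin. Hence the derivative of `Fmv` there is
`(u, v) ↦ (I11 u, I22 v, I13 u + I23 v)`, whose range is cut out by
`I11 I22 Z = I13 I22 X + I11 I23 Y` as soon as `I11, I22 ≠ 0`. -/

noncomputable section

/-- The parametrisation of the discrete momentum locus of the Moser–Veselov type
discretisation of the Suslov problem with time step `ε`. -/
def Fmv (I11 I22 I13 I23 ε : ℝ) : ℝ × ℝ → ℝ × ℝ × ℝ := fun p =>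
  (2 * (2 * I11 * p.1 + ε * p.2 * (I13 * p.1 + I23 * p.2)) /
      (4 + ε ^ 2 * (p.1 ^ 2 + p.2 ^ 2)),
   2 * (2 * I22 * p.2 - ε * p.1 * (I13 * p.1 + I23 * p.2)) /
      (4 + ε ^ 2 * (p.1 ^ 2 + p.2 ^ 2)),
   2 * (2 * (I13 * p.1 + I23 * p.2) + ε * (I22 - I11) * p.1 * p.2) /
      (4 + ε ^ 2 * (p.1 ^ 2 + p.2 ^ 2)))

open ContinuousLinearMap

section

variable {𝕜 E : Type*} [NontriviallyNormedField 𝕜] [NormedAddCommGroup E] [NormedSpace 𝕜 E]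
  {f g : E → 𝕜} {f' g' : E →L[𝕜] 𝕜} {x : E}

theorem HasFDerivAt.mul_of_eq_zero (hf : HasFDerivAt f f' x) (hg : HasFDerivAt g g' x)
    (hfx : f x = 0) (hgx : g x = 0) : HasFDerivAt (fun y => f y * g y) (0 : E →L[𝕜] 𝕜) x :=
  (hf.fun_mul hg).congr_fderiv (by ext; simp [hfx, hgx])

theorem HasFDerivAt.div_of_eq_zero (hf : HasFDerivAt f f' x) (hg : HasFDerivAt g g' x)
    (hfx : f x = 0) (hgx : g x ≠ 0) : HasFDerivAt (fun y => f y / g y) ((g x)⁻¹ • f') x := by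
  simp only [div_eq_mul_inv]
  exact (hf.fun_mul ((hasFDerivAt_inv hgx).comp x hg)).congr_fderiv (by ext; simp [hfx])

end

def suslovTangentMap (I11 I22 I13 I23 : ℝ) : ℝ × ℝ →L[ℝ] ℝ × ℝ × ℝ :=
  (I11 • fst ℝ ℝ ℝ).prod
    ((I22 • snd ℝ ℝ ℝ).prod (I13 • fst ℝ ℝ ℝ + I23 • snd ℝ ℝ ℝ))

@[simp]
theorem suslovTangentMap_apply (I11 I22 I13 I23 : ℝ) (p : ℝ × ℝ) :
    suslovTangentMap I11 I22 I13 I23 p = (I11 * p.1, I22 * p.2, I13 * p.1 + I23 * p.2) :=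
  rfl

theorem range_suslovTangentMap {I11 I22 : ℝ} (I13 I23 : ℝ) (h11 : I11 ≠ 0) (h22 : I22 ≠ 0) :
    Set.range (suslovTangentMap I11 I22 I13 I23) =
      {p : ℝ × ℝ × ℝ | I11 * I22 * p.2.2 = I13 * I22 * p.1 + I11 * I23 * p.2.1} := by
  ext ⟨X, Y, Z⟩
  simp only [Set.mem_range, Set.mem_ofPred_eq, suslovTangentMap_apply, Prod.ext_iff, Prod.exists]
  constructor
  · rintro ⟨u, v, rfl, rfl, rfl⟩
    ring
  · intro hplane
    refine ⟨X / I11, Y / I22, by field_simp, by field_simp, ?_⟩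
    field_simp
    linear_combination -hplane

theorem hasFDerivAt_Fmv_zero (I11 I22 I13 I23 ε : ℝ) :
    HasFDerivAt (Fmv I11 I22 I13 I23 ε) (suslovTangentMap I11 I22 I13 I23) (0, 0) := by
  have hu : HasFDerivAt (fun p : ℝ × ℝ => p.1) (fst ℝ ℝ ℝ) (0, 0) := hasFDerivAt_fst
  have hv : HasFDerivAt (fun p : ℝ × ℝ => p.2) (snd ℝ ℝ ℝ) (0, 0) := hasFDerivAt_snd
  have hℓ := (hu.const_mul I13).add (hv.const_mul I23)
  have hden : HasFDerivAt (fun p : ℝ × ℝ => 4 + ε ^ 2 * (p.1 ^ 2 + p.2 ^ 2))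
      (0 : ℝ × ℝ →L[ℝ] ℝ) (0, 0) := by
    simpa using (((hu.pow 2).add (hv.pow 2)).const_mul (ε ^ 2)).const_add 4
  have h1 := (((hu.const_mul (2 * I11)).add
    ((hv.const_mul ε).mul_of_eq_zero hℓ (by simp) (by simp))).const_mul 2).div_of_eq_zero
      hden (by simp) (by norm_num)
  have h2 := (((hv.const_mul (2 * I22)).sub
    ((hu.const_mul ε).mul_of_eq_zero hℓ (by simp) (by simp))).const_mul 2).div_of_eq_zero
      hden (by simp) (by norm_num)
  have h3 := (((hℓ.const_mul 2).add
    ((hu.const_mul (ε * (I22 - I11))).mul_of_eq_zero hv (by simp) (by simp))).const_mul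
      2).div_of_eq_zero hden (by simp) (by norm_num)
  refine (h1.prodMk (h2.prodMk h3)).congr_fderiv ?_
  ext <;>
    simp only [ne_eq, OfNat.ofNat_ne_zero, not_false_eq_true, zero_pow, add_zero, zero_add,
      mul_zero, sub_zero, mul_one, smul_add, smul_eq_mul, smul_apply, add_apply, comp_apply,
      inl_apply, inr_apply, ContinuousLinearMap.prod_apply, coe_fst', coe_snd',
      suslovTangentMap_apply] <;>
    ring

theorem suslov_momentum_locus_tangent_moser_veselov_general
    (I11 I22 I13 I23 : ℝ) (hI11 : 0 < I11) (hI22 : 0 < I22)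
    (ε : ℝ) :
    Fmv I11 I22 I13 I23 ε (0, 0) = (0, 0, 0) ∧
      DifferentiableAt ℝ (Fmv I11 I22 I13 I23 ε) (0, 0) ∧
      Set.range (fderiv ℝ (Fmv I11 I22 I13 I23 ε) (0, 0)) =
        {p : ℝ × ℝ × ℝ | I11 * I22 * p.2.2 = I13 * I22 * p.1 + I11 * I23 * p.2.1} := by
  have hF := hasFDerivAt_Fmv_zero I11 I22 I13 I23 ε
  refine ⟨by simp [Fmv], hF.differentiableAt, ?_⟩
  rw [hF.fderiv]
  exact range_suslovTangentMap I13 I23 hI11.ne' hI22.ne'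

/-- The discrete momentum locus of the Moser–Veselov type discretisation
of the Suslov problem passes through the origin, the parametrisation is differentiable
at `(0,0)`, and the image of its derivative there is the constraint plane `d*`; hence the
momentum locus and `d*` are tangent at the origin. -/
theorem suslov_momentum_locus_tangent_moser_veselov
    (I11 I22 I13 I23 : ℝ) (hI11 : 0 < I11) (hI22 : 0 < I22)
    (ε : ℝ) (hε : 0 < ε) :
    Fmv I11 I22 I13 I23 ε (0, 0) = (0, 0, 0) ∧
      DifferentiableAt ℝ (Fmv I11 I22 I13 I23 ε) (0, 0) ∧
      Set.range (fderiv ℝ (Fmv I11 I22 I13 I23 ε) (0, 0)) =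
        {p : ℝ × ℝ × ℝ | I11 * I22 * p.2.2 = I13 * I22 * p.1 + I11 * I23 * p.2.1} :=
  suslov_momentum_locus_tangent_moser_veselov_general I11 I22 I13 I23 hI11 hI22 ε

end
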